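/- arXiv:2301.11730 — 5 statements merged into one kernel-verified Lean document; each statement's English description precedes it below -/
import Mathlib

section
/- Let p be prime, u1, u2 distinct elements of F_p. For any x_i in F_{p^t} and any r in (F_p)^m and data vector x in (F_{p^t})^m, if z_j = (e_i + r·u_j)^T x for j = 1,2, then the vector (x_i, r^T x) equals the inverse of the 2x2 matrix [[1,u1],[1,u2]] applied to (z_1, z_2). In particular the client correctly reconstructs x_i from the two server answers. -/
open Matrix in
/-- Reconstruction in the secret-sharing based 2-server PIR scheme. -/
theorem pir_reconstruction
    (p : ℕ) [Fact p.Prime] (K : Type*) [Field K] [Algebra (ZMod p) K]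
    (t m : ℕ) (u1 u2 : ZMod p) (hu : u1 ≠ u2)
    (i : Fin m) (x : Fin m → K) (r : Fin m → ZMod p)
    (z : Fin 2 → K)
    (hz1 : z 0 = ∑ l, algebraMap (ZMod p) K ((if l = i then 1 else 0) + r l * u1) * x l)
    (hz2 : z 1 = ∑ l, algebraMap (ZMod p) K ((if l = i then 1 else 0) + r l * u2) * x l) :
    (((!![1, u1; 1, u2] : Matrix (Fin 2) (Fin 2) (ZMod p))⁻¹).map
        (algebraMap (ZMod p) K)).mulVec z
      = ![x i, ∑ l, algebraMap (ZMod p) K (r l) * x l] := by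
  set M : Matrix (Fin 2) (Fin 2) (ZMod p) := !![1, u1; 1, u2] with hM
  set f := algebraMap (ZMod p) K with hf
  set w : Fin 2 → K := ![x i, ∑ l, f (r l) * x l] with hw
  have hdet : IsUnit M.det := by
    have : M.det = u2 - u1 := by simp [hM, Matrix.det_fin_two]
    rw [this]
    exact (sub_ne_zero.mpr (Ne.symm hu)).isUnit
  have key : ∀ u : ZMod p, (∑ l, f ((if l = i then 1 else 0) + r l * u) * x l)
      = x i + f u * ∑ l, f (r l) * x l := by
    intro u
    simp only [RingHom.map_add, RingHom.map_mul, add_mul, Finset.sum_add_distrib]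
    congr 1
    · rw [Finset.sum_eq_single i]
      · simp
      · intro l _ hl; simp [hl]
      · simp
    · rw [Finset.mul_sum]
      exact Finset.sum_congr rfl fun l _ => by ring
  have hz : z = (M.map f).mulVec w := by
    funext j
    fin_cases j
    · show z 0 = (M.map ⇑f *ᵥ w) 0
      rw [hz1, key u1]
      simp [Matrix.mulVec, dotProduct, hM, hw, Fin.sum_univ_two]
    · show z 1 = (M.map ⇑f *ᵥ w) 1
      rw [hz2, key u2]
      simp [Matrix.mulVec, dotProduct, hM, hw, Fin.sum_univ_two]
  rw [hz, Matrix.mulVec_mulVec, ← Matrix.map_mul, Matrix.nonsing_inv_mul M hdet]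
  simp [hw]
end

section
/- (Verifiability of scheme Π1.) Fix prime p, distinct nonzero u1, u2 ∈ F_p, m, i ∈ [m], and database x ∈ (F_{p^t})^m. Let r, r_v ∈ (F_p)^m and v uniform on F_p \ {0} be the client's randomness, and let the honest answers be z_j = (e_i + r u_j)^T x, w_j = (v e_i + r_v u_j)^T x. For any adversary function A that, given (e_i + r u_1, v e_i + r_v u_1, x, i), outputs forged answers (ẑ1, ŵ1), the probability (over v, r, r_v) that the reconstructed value a ẑ1 + b z2 differs from x_i yet the verification equation v(a ẑ1 + b z2) = a ŵ1 + b w2 holds is at most 1/(p-1). -/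
/-!
Server 1 sees only the queries `e_i + u₁ r` and `v e_i + u₁ r_v`. Suppose two values of the
client's randomness, `(v, r, r_v)` and `(v', r', r_v')`, produce the same view and both make the
client accept a wrong value `y ≠ x_i`. Equal views give `r = r'`, hence the same forged answers
and the same `y`, and `u₁ (r_v - r_v') = (v' - v) e_i`; eliminating the mask between the two
servers' queries gives `u₁ (w₂ - w₂') = (u₁ - u₂)(v - v') x_i`. Subtracting the two verification
equations gives `(v - v') y = b (w₂ - w₂')`, and since `b (u₁ - u₂) = u₁` this becomes
`(v - v')(y - x_i) = 0`, so `v = v'` and then `r_v = r_v'`. Thus forged outcomes inject into the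
view space, which is `p - 1` times smaller than the space of the client's randomness.
-/

open Finset

theorem inv_vandermonde_two_zero_one {F : Type*} [Field F] (u1 u2 : F) :
    (!![1, u1; 1, u2] : Matrix (Fin 2) (Fin 2) F)⁻¹ 0 1 = u1 / (u1 - u2) := by
  have hdet : (!![1, u1; 1, u2] : Matrix (Fin 2) (Fin 2) F).det = u2 - u1 := by
    simp [Matrix.det_fin_two_of]
  rw [Matrix.inv_def, hdet, Matrix.adjugate_fin_two_of, div_eq_mul_inv, ← neg_sub u2 u1, inv_neg]
  simp [Ring.inverse_eq_inv', mul_comm]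

theorem div_mul_le_one_div {n N : ℕ} (h : n ≤ N) {k : ℝ} (hk : 0 ≤ k) :
    (n : ℝ) / (k * N) ≤ 1 / k := by
  rcases N.eq_zero_or_pos with rfl | hN
  · simpa [Nat.le_zero.1 h] using hk
  calc (n : ℝ) / (k * N) ≤ N / (k * N) := by gcongr
    _ = 1 / k := by rw [div_mul_cancel_right₀ (by positivity), one_div]

theorem card_filter_div_card_le_of_injOn {α β : Type*} [Fintype β] (S : Finset α)
    {P : α × β → Prop} [DecidablePred P] (g : α × β → β) (hg : Set.InjOn g {ω | P ω}) :
    (#((S ×ˢ (univ : Finset β)).filter P) : ℝ) / #(S ×ˢ (univ : Finset β)) ≤ 1 / #S := by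
  rw [card_product, card_univ, Nat.cast_mul]
  refine div_mul_le_one_div ?_ (Nat.cast_nonneg _)
  exact card_le_card_of_injOn g (fun _ _ => mem_univ _) (hg.mono fun ω hω => (mem_filter.1 hω).2)

namespace Pi1

variable {F K ι : Type*} [Field F] [AddCommGroup K] [Module F K] [DecidableEq ι]

def query (u v : F) (i : ι) (r : ι → F) : ι → F := Pi.single i v + u • r

theorem query_eq (u v : F) (i : ι) (r : ι → F) :
    query u v i r = fun l => v * (if l = i then 1 else 0) + r l * u := by
  ext l
  simp [query, Pi.single_apply, mul_comm]

theorem query_injective {u : F} (hu : u ≠ 0) (v : F) (i : ι) : Function.Injective (query u v i) :=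
  fun _ _ h => smul_right_injective _ hu (add_left_cancel h)

theorem smul_query_sub_query (u1 u2 v v' : F) (i : ι) (r r' : ι → F) :
    u1 • (query u2 v i r - query u2 v' i r') =
      u2 • (query u1 v i r - query u1 v' i r') + Pi.single i ((u1 - u2) * (v - v')) := by
  ext l
  simp only [query_eq, Pi.smul_apply, Pi.sub_apply, Pi.add_apply, smul_eq_mul, Pi.single_apply]
  split_ifs <;> ring

def serverView (u1 : F) (i : ι) : F × (ι → F) × (ι → F) → (ι → F) × (ι → F)
  | (v, r, rv) => (query u1 1 i r, query u1 v i rv)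

variable [Fintype ι]

def Forged (x : ι → K) (i : ι) (u1 u2 a b : F) (A : (ι → F) → (ι → F) → K × K) :
    F × (ι → F) × (ι → F) → Prop
  | (v, r, rv) =>
    let ans := A (query u1 1 i r) (query u1 v i rv)
    let y := a • ans.1 + b • Fintype.linearCombination F x (query u2 1 i r)
    y ≠ x i ∧ v • y = a • ans.2 + b • Fintype.linearCombination F x (query u2 v i rv)

theorem eq_of_accepts {u1 u2 b : F} (hu1 : u1 ≠ 0) (hb : b * (u1 - u2) = u1) {x : ι → K} {i : ι}
    {y c : K} (hy : y ≠ x i) {v v' : F} {r r' : ι → F} (hq : query u1 v i r = query u1 v' i r')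
    (h : v • y = c + b • Fintype.linearCombination F x (query u2 v i r))
    (h' : v' • y = c + b • Fintype.linearCombination F x (query u2 v' i r')) : v = v' := by
  have hL : u1 • (Fintype.linearCombination F x (query u2 v i r) -
      Fintype.linearCombination F x (query u2 v' i r')) = ((u1 - u2) * (v - v')) • x i := by
    rw [← map_sub, ← map_smul, smul_query_sub_query, hq, sub_self, smul_zero, zero_add,
      Fintype.linearCombination_apply_single]
  have hzero : (u1 * (v - v')) • (y - x i) = 0 := by
    calc (u1 * (v - v')) • (y - x i)
        = u1 • (v • y - v' • y) - (u1 * (v - v')) • x i := by module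
      _ = b • u1 • (Fintype.linearCombination F x (query u2 v i r) -
            Fintype.linearCombination F x (query u2 v' i r')) - (u1 * (v - v')) • x i := by
          rw [h, h']; module
      _ = 0 := by rw [hL, smul_smul, ← mul_assoc, hb, sub_self]
  rcases smul_eq_zero.1 hzero with h0 | h0
  · exact sub_eq_zero.1 ((mul_eq_zero.1 h0).resolve_left hu1)
  · exact absurd (sub_eq_zero.1 h0) hy

theorem injOn_serverView_forged {u1 u2 b : F} (hu1 : u1 ≠ 0) (hb : b * (u1 - u2) = u1)
    (x : ι → K) (i : ι) (a : F) (A : (ι → F) → (ι → F) → K × K) :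
    Set.InjOn (serverView u1 i) {ω | Forged x i u1 u2 a b A ω} := by
  rintro ⟨v, r, rv⟩ ⟨hy, h⟩ ⟨v', r', rv'⟩ ⟨-, h'⟩ hview
  obtain ⟨hr, hrv⟩ := Prod.mk.inj hview
  obtain rfl := query_injective hu1 1 i hr
  rw [← hrv] at h'
  obtain rfl := eq_of_accepts hu1 hb hy hrv h h'
  rw [query_injective hu1 v i hrv]

end Pi1

open Pi1

open Matrix in
theorem pi1_verifiable_general
    (p : ℕ) [Fact p.Prime] (K : Type*) [Field K] [Algebra (ZMod p) K] [DecidableEq K]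
    (m : ℕ) (u1 u2 a b : ZMod p) (hu : u1 ≠ u2) (hu1 : u1 ≠ 0)
    (hab : a = (!![1, u1; 1, u2] : Matrix (Fin 2) (Fin 2) (ZMod p))⁻¹ 0 0 ∧
           b = (!![1, u1; 1, u2] : Matrix (Fin 2) (Fin 2) (ZMod p))⁻¹ 0 1)
    (i : Fin m) (x : Fin m → K)
    (A : (Fin m → ZMod p) → (Fin m → ZMod p) → K × K) :
    ((((Finset.univ \ {0} : Finset (ZMod p)) ×ˢ
        ((Finset.univ : Finset (Fin m → ZMod p)) ×ˢ
          (Finset.univ : Finset (Fin m → ZMod p)))).filter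
        (fun ω =>
          let v := ω.1; let r := ω.2.1; let rv := ω.2.2
          let e : Fin m → ZMod p := fun l => if l = i then 1 else 0
          let ans := A (fun l => e l + r l * u1) (fun l => v * e l + rv l * u1)
          let z2 : K := ∑ l, algebraMap (ZMod p) K (e l + r l * u2) * x l
          let w2 : K := ∑ l, algebraMap (ZMod p) K (v * e l + rv l * u2) * x l
          (algebraMap (ZMod p) K a * ans.1 + algebraMap (ZMod p) K b * z2 ≠ x i) ∧
          algebraMap (ZMod p) K v *
              (algebraMap (ZMod p) K a * ans.1 + algebraMap (ZMod p) K b * z2)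
            = algebraMap (ZMod p) K a * ans.2 + algebraMap (ZMod p) K b * w2)).card : ℝ)
      / (((Finset.univ \ {0} : Finset (ZMod p)) ×ˢ
          ((Finset.univ : Finset (Fin m → ZMod p)) ×ˢ
            (Finset.univ : Finset (Fin m → ZMod p)))).card : ℝ)
      ≤ 1 / (p - 1) := by
  have hb : b * (u1 - u2) = u1 := by
    rw [hab.2, inv_vandermonde_two_zero_one, div_mul_cancel₀ _ (sub_ne_zero.2 hu)]
  have hunits : (#(univ \ {0} : Finset (ZMod p)) : ℝ) = p - 1 := by
    rw [card_univ_sdiff, ZMod.card, card_singleton, Nat.cast_sub (Fact.out : p.Prime).one_le,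
      Nat.cast_one]
  rw [univ_product_univ, ← hunits]
  refine card_filter_div_card_le_of_injOn _ (serverView u1 i)
    ((injOn_serverView_forged hu1 hb x i a A).mono ?_)
  rintro ⟨v, r, rv⟩ hω
  simpa [Forged, Fintype.linearCombination_apply, query_eq, Algebra.smul_def] using hω

open Matrix in
/-- Verifiability of scheme Π1: any adversary controlling server 1 makes the
client accept a wrong value with probability at most 1/(p-1) over the client's
randomness (v, r, r_v). -/
theorem pi1_verifiable
    (p : ℕ) [Fact p.Prime] (K : Type*) [Field K] [Algebra (ZMod p) K] [DecidableEq K]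
    (t m : ℕ) (u1 u2 a b : ZMod p) (hu : u1 ≠ u2) (hu1 : u1 ≠ 0) (hu2 : u2 ≠ 0)
    (hab : a = (!![1, u1; 1, u2] : Matrix (Fin 2) (Fin 2) (ZMod p))⁻¹ 0 0 ∧
           b = (!![1, u1; 1, u2] : Matrix (Fin 2) (Fin 2) (ZMod p))⁻¹ 0 1)
    (i : Fin m) (x : Fin m → K)
    (A : (Fin m → ZMod p) → (Fin m → ZMod p) → K × K) :
    ((((Finset.univ \ {0} : Finset (ZMod p)) ×ˢ
        ((Finset.univ : Finset (Fin m → ZMod p)) ×ˢ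
          (Finset.univ : Finset (Fin m → ZMod p)))).filter
        (fun ω =>
          let v := ω.1; let r := ω.2.1; let rv := ω.2.2
          let e : Fin m → ZMod p := fun l => if l = i then 1 else 0
          let ans := A (fun l => e l + r l * u1) (fun l => v * e l + rv l * u1)
          let z2 : K := ∑ l, algebraMap (ZMod p) K (e l + r l * u2) * x l
          let w2 : K := ∑ l, algebraMap (ZMod p) K (v * e l + rv l * u2) * x l
          (algebraMap (ZMod p) K a * ans.1 + algebraMap (ZMod p) K b * z2 ≠ x i) ∧
          algebraMap (ZMod p) K v *
              (algebraMap (ZMod p) K a * ans.1 + algebraMap (ZMod p) K b * z2)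
            = algebraMap (ZMod p) K a * ans.2 + algebraMap (ZMod p) K b * w2)).card : ℝ)
      / (((Finset.univ \ {0} : Finset (ZMod p)) ×ˢ
          ((Finset.univ : Finset (Fin m → ZMod p)) ×ˢ
            (Finset.univ : Finset (Fin m → ZMod p)))).card : ℝ)
      ≤ 1 / (p - 1) :=
  pi1_verifiable_general p K m u1 u2 a b hu hu1 hab i x A
end

section
/- (Verifiability of scheme A.) Fix a prime q and Δ0, Δ1 ∈ F_{q^t} with Δ0 ≠ 0. Choose u1, u2 uniformly at random with u1 ≠ u2 from F_q \ {0}, and independently ũ1 ≠ ũ2 from F_q \ {0}. Let a = u2/(u2-u1) and ã = ũ2/(ũ2-ũ1). Then Pr[a·Δ0 = ã·Δ1] ≤ 2(q-1)/(q-2)^2. -/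
/-!
Since `u₂ ≠ 0`, the coefficient `a = u₂ / (u₂ - u₁)` together with `u₂` determines `u₁`, so each
value of `a · Δ0` is attained by at most `q - 1` of the `(q - 1)(q - 2)` admissible pairs. Hence,
whatever `(ũ₁, ũ₂)` is, the event `a · Δ0 = ã · Δ1` has probability at most `1 / (q - 2)`, which is
at most `2 (q - 1) / (q - 2)²`.
-/

/-- Ordered pairs of distinct nonzero elements of F_q. -/
def distinctNonzeroPairs (q : ℕ) [NeZero q] : Finset (ZMod q × ZMod q) :=
  ((Finset.univ \ {0} : Finset (ZMod q)) ×ˢ (Finset.univ \ {0} : Finset (ZMod q))).filter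
    (fun u => u.1 ≠ u.2)

open Finset

theorem Finset.card_filter_fst_eq_snd_le {α β γ : Type*} [DecidableEq γ] (s : Finset α)
    (t : Finset β) (f : α → γ) (g : β → γ) {m : ℕ} (hf : ∀ c, #{x ∈ s | f x = c} ≤ m) :
    #{p ∈ s ×ˢ t | f p.1 = g p.2} ≤ m * #t := by
  calc #{p ∈ s ×ˢ t | f p.1 = g p.2}
      = ∑ y ∈ t, #{x ∈ s | f x = g y} := by
        simp only [card_filter, sum_product_right]
    _ ≤ ∑ _y ∈ t, m := sum_le_sum fun y _ => hf (g y)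
    _ = m * #t := by rw [sum_const, smul_eq_mul, mul_comm]

theorem div_sub_injective {F : Type*} [Field F] {z : F} (hz : z ≠ 0) :
    Function.Injective fun x : F => z / (z - x) := by
  intro x y h
  simp only [div_eq_mul_inv] at h
  simpa using mul_left_cancel₀ hz h

theorem card_distinctNonzeroPairs (q : ℕ) [NeZero q] :
    #(distinctNonzeroPairs q) = (q - 1) * (q - 2) := by
  have hpairs : distinctNonzeroPairs q = (univ \ {0} : Finset (ZMod q)).offDiag := by
    ext; simp [distinctNonzeroPairs, and_assoc]
  have hunits : #(univ \ {0} : Finset (ZMod q)) = q - 1 := by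
    rw [card_univ_sdiff, ZMod.card, card_singleton]
  rw [hpairs, offDiag_card, hunits, ← Nat.mul_sub_one, Nat.sub_sub]

theorem card_filter_algebraMap_coeff_mul_eq_le (q : ℕ) [Fact q.Prime] {K : Type*} [Field K]
    [Algebra (ZMod q) K] [DecidableEq K] {Δ : K} (hΔ : Δ ≠ 0) (c : K) :
    #{u ∈ distinctNonzeroPairs q | algebraMap (ZMod q) K (u.2 / (u.2 - u.1)) * Δ = c}
      ≤ q - 1 := by
  calc _ ≤ #(univ \ {0} : Finset (ZMod q)) := by
        refine card_le_card_of_injOn Prod.snd (fun u hu => ?_) fun u hu v hv huv => ?_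
        · simp_all [distinctNonzeroPairs]
        · simp only [coe_filter, Set.mem_ofPred_eq, distinctNonzeroPairs, mem_filter, mem_product,
            mem_sdiff, mem_univ, mem_singleton, true_and] at hu hv
          have hcoeff := (algebraMap (ZMod q) K).injective
            (mul_right_cancel₀ hΔ (hu.2.trans hv.2.symm))
          rw [huv] at hcoeff
          exact Prod.ext (div_sub_injective hv.1.1.2 hcoeff) huv
    _ = q - 1 := by rw [card_univ_sdiff, ZMod.card, card_singleton]

theorem div_mul_self_le_of_le_pred_mul {x N C : ℝ} (hx : 2 ≤ x) (hN : N = (x - 1) * (x - 2))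
    (hC : C ≤ (x - 1) * N) :
    C / (N * N) ≤ 2 * (x - 1) / (x - 2) ^ 2 := by
  rcases hx.eq_or_lt with rfl | hx
  · simp [hN]
  have hN0 : 0 < N := by rw [hN]; nlinarith
  calc C / (N * N) ≤ (x - 1) * N / (N * N) := by gcongr
    _ = 1 / (x - 2) := by field_simp; exact hN.symm
    _ ≤ 2 * (x - 1) / (x - 2) ^ 2 := by
        rw [div_le_div_iff₀ (by linarith) (by nlinarith)]; nlinarith

/-- Verifiability of scheme A: over uniform ordered pairs of distinct nonzero
evaluation points, the probability that a·Δ0 = ã·Δ1 is at most 2(q-1)/(q-2)². -/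
theorem schemeA_verifiable
    (q : ℕ) [Fact q.Prime] (K : Type*) [Field K] [Algebra (ZMod q) K] [DecidableEq K]
    (Δ0 Δ1 : K) (hΔ0 : Δ0 ≠ 0) :
    (((distinctNonzeroPairs q ×ˢ distinctNonzeroPairs q).filter
        (fun ω =>
          let u1 := ω.1.1; let u2 := ω.1.2; let ut1 := ω.2.1; let ut2 := ω.2.2
          algebraMap (ZMod q) K (u2 / (u2 - u1)) * Δ0
            = algebraMap (ZMod q) K (ut2 / (ut2 - ut1)) * Δ1)).card : ℝ)
      / ((distinctNonzeroPairs q ×ˢ distinctNonzeroPairs q).card : ℝ)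
      ≤ 2 * ((q : ℝ) - 1) / ((q : ℝ) - 2) ^ 2 := by
  have hq : 2 ≤ q := (Fact.out : q.Prime).two_le
  have hcount := card_filter_fst_eq_snd_le (distinctNonzeroPairs q) (distinctNonzeroPairs q)
    (fun u => algebraMap (ZMod q) K (u.2 / (u.2 - u.1)) * Δ0)
    (fun u => algebraMap (ZMod q) K (u.2 / (u.2 - u.1)) * Δ1)
    (card_filter_algebraMap_coeff_mul_eq_le q hΔ0)
  rw [card_product, Nat.cast_mul]
  refine div_mul_self_le_of_le_pred_mul (by exact_mod_cast hq : (2 : ℝ) ≤ q) ?_ ?_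
  · rw [card_distinctNonzeroPairs]
    push_cast [Nat.cast_sub (by omega : 1 ≤ q), Nat.cast_sub hq]
    ring
  · calc _ ≤ (((q - 1) * #(distinctNonzeroPairs q) : ℕ) : ℝ) := Nat.cast_le.mpr hcount
      _ = _ := by push_cast [Nat.cast_sub (by omega : 1 ≤ q)]; ring
end

section
/- Let G be a cyclic group of prime order p with generator g, and let v ∈ F_p. For any A, Â, V, V̂ ∈ F_p with g^V = (g^v)^A, if g^{V̂} = (g^v)^{Â} and Â ≠ A, then v = (V̂ - V)/(Â - A) in F_p. Hence producing a successful forgery reveals the discrete logarithm v of g^v. -/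
/-- A successful forgery against the publicly verifiable scheme Π2 reveals the
discrete logarithm v of the verification key g^v. -/
theorem forgery_reveals_dlog
    (p : ℕ) [Fact p.Prime] (G : Type*) [Group G] [Fintype G]
    (hG : Fintype.card G = p) (g : G) (hg : ∀ x : G, x ∈ Subgroup.zpowers g)
    (v A Ah V Vh : ZMod p)
    (honest : g ^ V.val = (g ^ v.val) ^ A.val)
    (forged : g ^ Vh.val = (g ^ v.val) ^ Ah.val)
    (hne : Ah ≠ A) :
    v = (Vh - V) / (Ah - A) := by
  have hp := (Fact.out : p.Prime)
  have horder : orderOf g = p := by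
    have hdvd : orderOf g ∣ p := hG ▸ orderOf_dvd_card
    rcases (Nat.Prime.eq_one_or_self_of_dvd hp _ hdvd) with h1 | h
    · exfalso
      have hg1 : g = 1 := orderOf_eq_one_iff.mp h1
      have : ∀ x : G, x = 1 := by
        intro x
        rcases hg x with ⟨n, rfl⟩
        simp [hg1]
      have : Fintype.card G = 1 := Fintype.card_eq_one_iff.mpr ⟨1, fun x => this x⟩
      have h2 := hp.two_le
      omega
    · exact h
  have key : ∀ a b : ZMod p, g ^ a.val = (g ^ v.val) ^ b.val → a = v * b := by
    intro a b h
    rw [← pow_mul] at h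
    have := (pow_eq_pow_iff_modEq.mp h)
    rw [horder] at this
    have := (ZMod.natCast_eq_natCast_iff _ _ _).mpr this
    push_cast at this
    simpa [ZMod.natCast_val, ZMod.cast_id] using this
  have h1 : V = v * A := key V A honest
  have h2 : Vh = v * Ah := key Vh Ah forged
  have hne' : Ah - A ≠ 0 := sub_ne_zero.mpr hne
  field_simp
  rw [h1, h2]
  ring
end

section
/- (Correctness of scheme Π3 hash verification.) Let p, r be primes with p | r-1, g1,...,gt of order p in (Z/rZ)^*, and h the associated homomorphic hash on (F_p)^t. Fix distinct u1,u2 ∈ F_p, v ∈ F_p \ {0}, r_v ∈ (F_p)^m, x ∈ (F_p^t)^m (each file represented as a vector of t coordinates over F_p), and i ∈ [m]. Let w_j = (v e_i + r_v u_j)^T x ∈ (F_p)^t for j=1,2, and (a,b) the first row of the inverse of [[1,u1],[1,u2]]. Then h(x_i)^v = h(w_1)^a · h(w_2)^b in (Z/rZ)^*. -/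
section Helpers

variable {r p : ℕ} [Fact p.Prime]

lemma pow_val_mul [NeZero p] (u : (ZMod r)ˣ) (hu : orderOf u = p) (c d : ZMod p) :
    (u ^ c.val) ^ d.val = u ^ ((c * d).val) := by
  rw [← pow_mul]
  rw [pow_eq_pow_iff_modEq, hu]
  simp [Nat.ModEq, ZMod.val_mul, Nat.mod_mod]

lemma pow_val_add [NeZero p] (u : (ZMod r)ˣ) (hu : orderOf u = p) (c d : ZMod p) :
    u ^ c.val * u ^ d.val = u ^ ((c + d).val) := by
  rw [← pow_add, pow_eq_pow_iff_modEq, hu]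
  simp [Nat.ModEq, ZMod.val_add, Nat.mod_mod]

end Helpers

open Matrix in
/-- Correctness of the hash verification in scheme Π3:
h(x_i)^v = h(w1)^a · h(w2)^b. -/
theorem pi3_hash_correct
    (p r t m : ℕ) [Fact p.Prime] [Fact r.Prime] (hpr : p ∣ r - 1)
    (g : Fin t → (ZMod r)ˣ) (hg : ∀ l, orderOf (g l) = p)
    (u1 u2 a b : ZMod p) (hu : u1 ≠ u2)
    (hab : a = (!![1, u1; 1, u2] : Matrix (Fin 2) (Fin 2) (ZMod p))⁻¹ 0 0 ∧
           b = (!![1, u1; 1, u2] : Matrix (Fin 2) (Fin 2) (ZMod p))⁻¹ 0 1)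
    (v : ZMod p) (hv : v ≠ 0) (rv : Fin m → ZMod p)
    (i : Fin m) (x : Fin m → (Fin t → ZMod p))
    (w1 w2 : Fin t → ZMod p)
    (hw1 : w1 = fun s => ∑ l, (v * (if l = i then 1 else 0) + rv l * u1) * x l s)
    (hw2 : w2 = fun s => ∑ l, (v * (if l = i then 1 else 0) + rv l * u2) * x l s) :
    (∏ s, g s ^ ((x i s).val)) ^ v.val
      = (∏ s, g s ^ ((w1 s).val)) ^ a.val * (∏ s, g s ^ ((w2 s).val)) ^ b.val := by
  haveI : NeZero p := ⟨(Fact.out : p.Prime).ne_zero⟩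
  obtain ⟨ha, hb⟩ := hab
  have hdet : u2 - u1 ≠ 0 := sub_ne_zero.mpr (Ne.symm hu)
  have hA : IsUnit (!![1, u1; 1, u2] : Matrix (Fin 2) (Fin 2) (ZMod p)).det := by
    simp [Matrix.det_fin_two_of]
    exact sub_ne_zero.mpr (Ne.symm hu)
  have ha' : a = u2 / (u2 - u1) := by
    rw [ha, Matrix.inv_def, Matrix.adjugate_fin_two]
    simp [Matrix.det_fin_two_of, div_eq_inv_mul]
  have hb' : b = -u1 / (u2 - u1) := by
    rw [hb, Matrix.inv_def, Matrix.adjugate_fin_two]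
    simp [Matrix.det_fin_two_of, div_eq_inv_mul]
  have hab1 : a + b = 1 := by rw [ha', hb']; field_simp; ring
  have hab2 : a * u1 + b * u2 = 0 := by rw [ha', hb']; field_simp; ring
  have key : ∀ s, a * w1 s + b * w2 s = v * x i s := by
    intro s
    rw [hw1, hw2]
    simp only [Finset.mul_sum, ← Finset.sum_add_distrib]
    have : ∀ l : Fin m,
        a * ((v * (if l = i then 1 else 0) + rv l * u1) * x l s)
          + b * ((v * (if l = i then 1 else 0) + rv l * u2) * x l s)
        = ((a + b) * (v * (if l = i then 1 else 0)) + (a * u1 + b * u2) * rv l) * x l s := by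
      intro l; ring
    rw [Finset.sum_congr rfl fun l _ => this l]
    simp [hab1, hab2]
  calc (∏ s, g s ^ ((x i s).val)) ^ v.val
      = ∏ s, g s ^ ((v * x i s).val) := by
        rw [← Finset.prod_pow]
        exact Finset.prod_congr rfl fun s _ => by
          rw [pow_val_mul (g s) (hg s), mul_comm]
    _ = ∏ s, g s ^ ((a * w1 s + b * w2 s).val) := by
        exact Finset.prod_congr rfl fun s _ => by rw [key s]
    _ = (∏ s, g s ^ ((w1 s).val)) ^ a.val * (∏ s, g s ^ ((w2 s).val)) ^ b.val := by
        rw [← Finset.prod_pow, ← Finset.prod_pow, ← Finset.prod_mul_distrib]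
        exact Finset.prod_congr rfl fun s _ => by
          rw [pow_val_mul (g s) (hg s), pow_val_mul (g s) (hg s),
            pow_val_add (g s) (hg s), mul_comm (w1 s) a, mul_comm (w2 s) b]
end
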